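/- Fix K ∈ ℕ with K ≥ 1, N = 2K+1, L > 0, ε ∈ ℝ, M > 0, a > 0, b, c ∈ ℝ, and let u¹, u⁰, v be real-valued grid functions such that f := a·v + b·u¹ + c·u⁰ has zero mean. Define G_N(z) = (1/(2Ma))·‖a·z + b·u¹ + c·u⁰‖₋₁,N² + E_N(z) for real-valued grid functions z, and μ_N(v) = v³ + (1−ε)v + 2Δ_N v + Δ_N² v. Then for every real-valued grid function w, the function s ↦ G_N(v + s·w) (s ∈ ℝ) is differentiable at 0 with derivative Re( ( (1/M)·((−Δ_N)⁻¹ f) + μ_N(v), w )_N ). -/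

import Mathlib

open Complex

noncomputable section

/-- A grid function on the `N × N` grid with `N = 2K+1`. -/
abbrev GridFn (K : ℕ) := Fin (2 * K + 1) × Fin (2 * K + 1) → ℂ

/-- A grid function is real-valued if all its values are real. -/
def RealValued {K : ℕ} (w : GridFn K) : Prop := ∀ m, (w m).im = 0

/-- A grid function has zero (discrete) mean if its values sum to zero. -/
def ZeroMean {K : ℕ} (w : GridFn K) : Prop := (∑ s, w s) = 0

/-- The discrete Fourier coefficient `ĉ_w(r) = N⁻² ∑_s w(s) exp(−2πi(r₁s₁+r₂s₂)/N)`. -/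
def dft (K : ℕ) (w : GridFn K) (r : ℤ × ℤ) : ℂ :=
  ((2 * K + 1 : ℂ) ^ 2)⁻¹ *
    ∑ s : Fin (2 * K + 1) × Fin (2 * K + 1),
      w s * Complex.exp (-(2 * Real.pi * Complex.I) *
        ((r.1 : ℂ) * ((s.1 : ℕ) : ℂ) + (r.2 : ℂ) * ((s.2 : ℕ) : ℂ)) / (2 * K + 1))

/-- The set of nonzero frequencies `{r ∈ ℤ² : −K ≤ r₁,r₂ ≤ K} \ {0}`. -/
def freqs (K : ℕ) : Finset (ℤ × ℤ) :=
  (Finset.Icc (-(K : ℤ)) K ×ˢ Finset.Icc (-(K : ℤ)) K).erase (0, 0)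

/-- The spectral operator `(−Δ_N)^α` for `α ∈ {−1, 1, 2}` (defined for any `α : ℤ`):
`((−Δ_N)^α w)(m) = ∑_{r ≠ 0} (4π²|r|²/L²)^α ĉ_w(r) exp(2πi r·m/N)`. -/
def specOp (K : ℕ) (L : ℝ) (α : ℤ) (w : GridFn K) : GridFn K := fun m =>
  ∑ r ∈ freqs K,
    (((4 * Real.pi ^ 2 * ((r.1 : ℝ) ^ 2 + (r.2 : ℝ) ^ 2) / L ^ 2 : ℝ) : ℂ)) ^ α *
      dft K w r *
      Complex.exp ((2 * Real.pi * Complex.I) *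
        ((r.1 : ℂ) * ((m.1 : ℕ) : ℂ) + (r.2 : ℂ) * ((m.2 : ℕ) : ℂ)) / (2 * K + 1))

/-- The discrete Laplacian `Δ_N w = −((−Δ_N)¹ w)`. -/
def lapN (K : ℕ) (L : ℝ) (w : GridFn K) : GridFn K := fun m => -(specOp K L 1 w m)

/-- The discrete biharmonic operator `Δ_N² w = (−Δ_N)² w`. -/
def bilapN (K : ℕ) (L : ℝ) (w : GridFn K) : GridFn K := specOp K L 2 w

/-- The discrete inverse (negative) Laplacian `(−Δ_N)⁻¹`. -/
def invNegLapN (K : ℕ) (L : ℝ) (w : GridFn K) : GridFn K := specOp K L (-1) w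

/-- The discrete inner product `(u,v)_N = h² ∑_s u(s) conj(v(s))` with `h = L/N`. -/
def ipN (K : ℕ) (L : ℝ) (u v : GridFn K) : ℂ :=
  (((L / (2 * K + 1)) ^ 2 : ℝ) : ℂ) * ∑ s, u s * (starRingEnd ℂ) (v s)

/-- The spectral partial derivative `D₁` (in the first coordinate direction). -/
def D1 (K : ℕ) (L : ℝ) (w : GridFn K) : GridFn K := fun m =>
  ∑ r ∈ Finset.Icc (-(K : ℤ)) K ×ˢ Finset.Icc (-(K : ℤ)) K,
    (2 * Real.pi * Complex.I * (r.1 : ℂ) / (L : ℂ)) * dft K w r *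
      Complex.exp ((2 * Real.pi * Complex.I) *
        ((r.1 : ℂ) * ((m.1 : ℕ) : ℂ) + (r.2 : ℂ) * ((m.2 : ℕ) : ℂ)) / (2 * K + 1))

/-- The spectral partial derivative `D₂` (in the second coordinate direction). -/
def D2 (K : ℕ) (L : ℝ) (w : GridFn K) : GridFn K := fun m =>
  ∑ r ∈ Finset.Icc (-(K : ℤ)) K ×ˢ Finset.Icc (-(K : ℤ)) K,
    (2 * Real.pi * Complex.I * (r.2 : ℂ) / (L : ℂ)) * dft K w r *
      Complex.exp ((2 * Real.pi * Complex.I) *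
        ((r.1 : ℂ) * ((m.1 : ℕ) : ℂ) + (r.2 : ℂ) * ((m.2 : ℕ) : ℂ)) / (2 * K + 1))

/-- The discrete squared gradient `|∇_N w|²(m) = |(D₁w)(m)|² + |(D₂w)(m)|²`. -/
def gradSqN (K : ℕ) (L : ℝ) (w : GridFn K) (m : Fin (2 * K + 1) × Fin (2 * K + 1)) : ℝ :=
  ‖D1 K L w m‖ ^ 2 + ‖D2 K L w m‖ ^ 2

/-- The discrete PFC energy
`E_N(z) = h² ∑_m [¼z(m)⁴ + ((1−ε)/2)z(m)² − |∇_N z|²(m) + ½|(Δ_N z)(m)|²]`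
of a real-valued grid function `z`. -/
def EN (K : ℕ) (L ε : ℝ) (z : GridFn K) : ℝ :=
  (L / (2 * K + 1)) ^ 2 *
    ∑ m, ((1/4) * (z m).re ^ 4 + ((1 - ε) / 2) * (z m).re ^ 2
      - gradSqN K L z m + (1/2) * ‖lapN K L z m‖ ^ 2)

/-- The squared discrete negative norm `‖w‖₋₁,N² = Re((−Δ_N)⁻¹w, w)_N`. -/
def negNormSq (K : ℕ) (L : ℝ) (w : GridFn K) : ℝ :=
  (ipN K L (invNegLapN K L w) w).re

/-- The discrete PFC chemical potential `μ_N(v) = v³ + (1−ε)v + 2Δ_N v + Δ_N² v`. -/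
def muN (K : ℕ) (L ε : ℝ) (v : GridFn K) : GridFn K := fun m =>
  (v m) ^ 3 + ((1 - ε : ℝ) : ℂ) * v m + 2 * lapN K L v m + bilapN K L v m

/-- The objective `G_N(z) = (1/(2Ma))‖a z + b u¹ + c u⁰‖₋₁,N² + E_N(z)`. -/
def GN (K : ℕ) (L ε M a b c : ℝ) (u1 u0 : GridFn K) (z : GridFn K) : ℝ :=
  (1 / (2 * M * a)) *
    negNormSq K L (fun m => (a : ℂ) * z m + (b : ℂ) * u1 m + (c : ℂ) * u0 m)
    + EN K L ε z

/-! Along the line `s ↦ v + s w` every term of `G_N` is a polynomial in `s`, so the derivative at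
`0` is its linear coefficient. The quadratic terms have the form `Re (A(v + s w), B(v + s w))_N`
for Fourier multipliers `A, B`, with linear coefficient `Re[(A w, B v)_N + (A v, B w)_N]`. The
characters `exp(2πi r·m/N)`, `|r₁|, |r₂| ≤ K`, are orthogonal on the grid, so all spectral
operators are diagonal in the discrete Fourier basis; this gives the summation-by-parts identities
`(∇_N v, ∇_N w)_N = (−Δ_N v, w)_N`, `(Δ_N v, Δ_N w)_N = (Δ_N² v, w)_N` and the symmetry of
`(−Δ_N)⁻¹`, which collect the linear coefficient into `Re((1/M)(−Δ_N)⁻¹f + μ_N(v), w)_N`. -/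

open Finset ComplexConjugate

section InnerProduct

variable {K : ℕ} (L : ℝ)

lemma ipN_add_left (u u' v : GridFn K) :
    ipN K L (fun m => u m + u' m) v = ipN K L u v + ipN K L u' v := by
  simp only [ipN, add_mul, sum_add_distrib, mul_add]

lemma ipN_smul_left (z : ℂ) (u v : GridFn K) :
    ipN K L (fun m => z * u m) v = z * ipN K L u v := by
  simp only [ipN, mul_assoc, ← mul_sum]
  ring

lemma ipN_ofReal_smul_right (x : ℝ) (u v : GridFn K) :
    ipN K L u (fun m => x * v m) = x * ipN K L u v := by
  simp only [ipN, map_mul, Complex.conj_ofReal, mul_left_comm _ (x : ℂ), ← mul_sum]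

lemma re_ipN_comm (u v : GridFn K) : (ipN K L u v).re = (ipN K L v u).re := by
  rw [← Complex.conj_re (ipN K L v u)]
  simp only [ipN, map_mul, map_sum, Complex.conj_ofReal, Complex.conj_conj, mul_comm (u _)]

lemma re_ipN_self (u : GridFn K) :
    (ipN K L u u).re = (L / (2 * K + 1)) ^ 2 * ∑ m, ‖u m‖ ^ 2 := by
  simp only [ipN, Complex.mul_conj, Complex.normSq_eq_norm_sq, ← Complex.ofReal_sum,
    ← Complex.ofReal_mul, Complex.ofReal_re]

lemma re_ipN_of_realValued_right {w : GridFn K} (hw : RealValued w) (u : GridFn K) :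
    (ipN K L u w).re = (L / (2 * K + 1)) ^ 2 * ∑ m, (u m).re * (w m).re := by
  rw [ipN, Complex.re_ofReal_mul, Complex.re_sum]
  simp [Complex.mul_re, hw _]

lemma ipN_add_smul_add_smul (x y x' y' : GridFn K) (s : ℝ) :
    ipN K L (fun m => x m + s * y m) (fun m => x' m + s * y' m) =
      ipN K L x x' + s * (ipN K L y x' + ipN K L x y') + (s : ℂ) ^ 2 * ipN K L y y' := by
  simp only [ipN, map_add, map_mul, Complex.conj_ofReal, mul_sum, ← sum_add_distrib]
  exact sum_congr rfl fun m _ => by ring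

lemma hasDerivAt_re_ipN_add_smul (x y x' y' : GridFn K) :
    HasDerivAt (fun s : ℝ => (ipN K L (fun m => x m + s * y m) (fun m => x' m + s * y' m)).re)
      ((ipN K L y x').re + (ipN K L x y').re) 0 := by
  have hpoly : HasDerivAt (fun s : ℝ => (ipN K L x x').re +
      s * ((ipN K L y x').re + (ipN K L x y').re) + s ^ 2 * (ipN K L y y').re)
      ((ipN K L y x').re + (ipN K L x y').re) 0 := by
    simpa using (((hasDerivAt_id (0 : ℝ)).mul_const _).const_add _).fun_add
      ((hasDerivAt_pow 2 (0 : ℝ)).mul_const ((ipN K L y y').re))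
  refine hpoly.congr_of_eventuallyEq (.of_forall fun s => ?_)
  dsimp only
  rw [ipN_add_smul_add_smul, ← Complex.ofReal_pow]
  simp only [Complex.add_re, Complex.re_ofReal_mul]

end InnerProduct

section Characters

variable {K : ℕ}

lemma sum_range_pow_of_pow_eq_one {F : Type*} [Field F] [DecidableEq F] {x : F} {n : ℕ}
    (hx : x ^ n = 1) : ∑ i ∈ range n, x ^ i = if x = 1 then (n : F) else 0 := by
  split_ifs with h
  · simp [h]
  · rw [geom_sum_eq h, hx, sub_self, zero_div]

lemma sum_exp_two_pi_I_mul_div {n : ℕ} (hn : n ≠ 0) (k : ℤ) :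
    ∑ s : Fin n, Complex.exp (2 * Real.pi * Complex.I * k * (s : ℕ) / n) =
      if (n : ℤ) ∣ k then (n : ℂ) else 0 := by
  set ζ := Complex.exp (2 * Real.pi * Complex.I / n)
  have hζ : IsPrimitiveRoot ζ n := Complex.isPrimitiveRoot_exp n hn
  have hterm (s : ℕ) : Complex.exp (2 * Real.pi * Complex.I * k * s / n) = (ζ ^ k) ^ s := by
    rw [← zpow_natCast, ← zpow_mul, ← Complex.exp_int_mul]
    push_cast
    ring_nf
  have hpow : (ζ ^ k) ^ n = 1 := by
    rw [← zpow_natCast, ← zpow_mul, mul_comm, zpow_mul, zpow_natCast, hζ.pow_eq_one, one_zpow]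
  simp_rw [hterm]
  rw [Fin.sum_univ_eq_sum_range (fun s => (ζ ^ k) ^ s), sum_range_pow_of_pow_eq_one hpow]
  simp only [hζ.zpow_eq_one_iff_dvd]

def freqBox (K : ℕ) : Finset (ℤ × ℤ) := Icc (-(K : ℤ)) K ×ˢ Icc (-(K : ℤ)) K

lemma freqs_eq_erase : freqs K = (freqBox K).erase (0, 0) := rfl

lemma freqs_subset_freqBox : freqs K ⊆ freqBox K := erase_subset _ _

lemma dvd_sub_iff_eq_of_mem_Icc {x y : ℤ} (hx : x ∈ Icc (-(K : ℤ)) K) (hy : y ∈ Icc (-(K : ℤ)) K) :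
    ((2 * K + 1 : ℕ) : ℤ) ∣ x - y ↔ x = y := by
  refine ⟨fun h => ?_, fun h => by simp [h]⟩
  rw [mem_Icc] at hx hy
  have := Int.eq_zero_of_abs_lt_dvd h (abs_lt.mpr ⟨by omega, by omega⟩)
  omega

def gridChar (K : ℕ) (r : ℤ × ℤ) (m : Fin (2 * K + 1) × Fin (2 * K + 1)) : ℂ :=
  Complex.exp ((2 * Real.pi * Complex.I) *
    ((r.1 : ℂ) * ((m.1 : ℕ) : ℂ) + (r.2 : ℂ) * ((m.2 : ℕ) : ℂ)) / (2 * K + 1))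

lemma conj_gridChar (r : ℤ × ℤ) (m : Fin (2 * K + 1) × Fin (2 * K + 1)) :
    conj (gridChar K r m) = Complex.exp (-(2 * Real.pi * Complex.I) *
      ((r.1 : ℂ) * ((m.1 : ℕ) : ℂ) + (r.2 : ℂ) * ((m.2 : ℕ) : ℂ)) / (2 * K + 1)) := by
  rw [gridChar, ← Complex.exp_conj]
  simp [map_div₀, Complex.conj_ofNat]

lemma sum_gridChar_mul_conj {r r' : ℤ × ℤ} (hr : r ∈ freqBox K) (hr' : r' ∈ freqBox K) :
    ∑ m, gridChar K r m * conj (gridChar K r' m) =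
      if r = r' then (2 * K + 1 : ℂ) ^ 2 else 0 := by
  rw [freqBox, mem_product] at hr hr'
  have hN : 2 * K + 1 ≠ 0 := by omega
  have hsplit (m : Fin (2 * K + 1) × Fin (2 * K + 1)) : gridChar K r m * conj (gridChar K r' m) =
      Complex.exp (2 * Real.pi * Complex.I * ((r.1 - r'.1 : ℤ) : ℂ) * ((m.1 : ℕ) : ℂ)
          / ((2 * K + 1 : ℕ) : ℂ)) *
        Complex.exp (2 * Real.pi * Complex.I * ((r.2 - r'.2 : ℤ) : ℂ) * ((m.2 : ℕ) : ℂ)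
          / ((2 * K + 1 : ℕ) : ℂ)) := by
    rw [conj_gridChar, gridChar, ← Complex.exp_add, ← Complex.exp_add]
    push_cast
    ring_nf
  simp_rw [hsplit, Fintype.sum_prod_type, ← Finset.sum_mul_sum, sum_exp_two_pi_I_mul_div hN,
    dvd_sub_iff_eq_of_mem_Icc hr.1 hr'.1, dvd_sub_iff_eq_of_mem_Icc hr.2 hr'.2, Prod.ext_iff]
  split_ifs <;> simp_all
  ring

end Characters

section FourierSums

variable {K : ℕ}

def fourierSum (K : ℕ) (S : Finset (ℤ × ℤ)) (c : ℤ × ℤ → ℂ) : GridFn K :=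
  fun m => ∑ r ∈ S, c r * gridChar K r m

lemma gridSize_ne_zero : (2 * K + 1 : ℂ) ≠ 0 := by
  exact_mod_cast (by omega : 2 * K + 1 ≠ 0)

lemma dft_eq_sum_mul_conj_gridChar (w : GridFn K) (r : ℤ × ℤ) :
    dft K w r = ((2 * K + 1 : ℂ) ^ 2)⁻¹ * ∑ s, w s * conj (gridChar K r s) := by
  simp only [dft, conj_gridChar]

lemma dft_fourierSum {S : Finset (ℤ × ℤ)} (hS : S ⊆ freqBox K) (c : ℤ × ℤ → ℂ) {r : ℤ × ℤ}
    (hr : r ∈ S) : dft K (fourierSum K S c) r = c r := by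
  have horth : ∀ r' ∈ S, ∑ s, c r' * (gridChar K r' s * conj (gridChar K r s)) =
      if r' = r then c r * (2 * K + 1 : ℂ) ^ 2 else 0 := by
    intro r' hr'
    rw [← mul_sum, sum_gridChar_mul_conj (hS hr') (hS hr)]
    split_ifs with h <;> simp [h]
  rw [dft_eq_sum_mul_conj_gridChar]
  simp only [fourierSum, sum_mul, mul_assoc]
  rw [sum_comm, sum_congr rfl horth, sum_ite_eq' S r, if_pos hr]
  field_simp [gridSize_ne_zero (K := K)]

lemma ipN_fourierSum_left (L : ℝ) (S : Finset (ℤ × ℤ)) (c : ℤ × ℤ → ℂ) (w : GridFn K) :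
    ipN K L (fourierSum K S c) w = (L ^ 2 : ℂ) * ∑ r ∈ S, c r * conj (dft K w r) := by
  have hN := gridSize_ne_zero (K := K)
  simp only [ipN, fourierSum, dft_eq_sum_mul_conj_gridChar, map_mul, map_sum, map_inv₀, map_pow,
    Complex.conj_conj, sum_mul, mul_sum]
  rw [sum_comm]
  refine sum_congr rfl fun r _ => sum_congr rfl fun s _ => ?_
  simp only [map_add, map_mul, map_ofNat, map_one, Complex.conj_natCast]
  push_cast
  field_simp

lemma ipN_fourierSum_fourierSum (L : ℝ) {S : Finset (ℤ × ℤ)} (hS : S ⊆ freqBox K)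
    (c d : ℤ × ℤ → ℂ) :
    ipN K L (fourierSum K S c) (fourierSum K S d) = (L ^ 2 : ℂ) * ∑ r ∈ S, c r * conj (d r) := by
  rw [ipN_fourierSum_left]
  exact congrArg _ (sum_congr rfl fun r hr => by rw [dft_fourierSum hS d hr])

lemma dft_add_smul (p q : GridFn K) (z : ℂ) (r : ℤ × ℤ) :
    dft K (fun m => p m + z * q m) r = dft K p r + z * dft K q r := by
  simp only [dft, add_mul, sum_add_distrib, mul_assoc, ← mul_sum]
  ring

lemma fourierSum_mul_dft_add_smul (S : Finset (ℤ × ℤ)) (φ : ℤ × ℤ → ℂ) (p q : GridFn K)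
    (z : ℂ) :
    fourierSum K S (fun r => φ r * dft K (fun m => p m + z * q m) r) =
      fun m => fourierSum K S (fun r => φ r * dft K p r) m +
        z * fourierSum K S (fun r => φ r * dft K q r) m := by
  funext m
  simp only [fourierSum, dft_add_smul, mul_sum, ← sum_add_distrib]
  exact sum_congr rfl fun r _ => by ring

end FourierSums

section SpectralOperators

variable {K : ℕ} (L : ℝ)

def negLapSymbol (r : ℤ × ℤ) : ℝ := 4 * Real.pi ^ 2 * ((r.1 : ℝ) ^ 2 + (r.2 : ℝ) ^ 2) / L ^ 2

lemma specOp_eq_fourierSum (α : ℤ) (w : GridFn K) :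
    specOp K L α w = fourierSum K (freqs K) (fun r => (negLapSymbol L r : ℂ) ^ α * dft K w r) :=
  rfl

lemma D1_eq_fourierSum (w : GridFn K) :
    D1 K L w = fourierSum K (freqBox K)
      (fun r => 2 * Real.pi * Complex.I * r.1 / L * dft K w r) :=
  rfl

lemma D2_eq_fourierSum (w : GridFn K) :
    D2 K L w = fourierSum K (freqBox K)
      (fun r => 2 * Real.pi * Complex.I * r.2 / L * dft K w r) :=
  rfl

variable (p q : GridFn K) (z : ℂ)

lemma specOp_add_smul (α : ℤ) :
    specOp K L α (fun m => p m + z * q m) = fun m => specOp K L α p m + z * specOp K L α q m :=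
  fourierSum_mul_dft_add_smul _ _ p q z

lemma D1_add_smul : D1 K L (fun m => p m + z * q m) = fun m => D1 K L p m + z * D1 K L q m :=
  fourierSum_mul_dft_add_smul _ _ p q z

lemma D2_add_smul : D2 K L (fun m => p m + z * q m) = fun m => D2 K L p m + z * D2 K L q m :=
  fourierSum_mul_dft_add_smul _ _ p q z

lemma lapN_add_smul :
    lapN K L (fun m => p m + z * q m) = fun m => lapN K L p m + z * lapN K L q m := by
  funext m
  simp only [lapN, specOp_add_smul]
  ring

lemma ipN_specOp_left (α : ℤ) :
    ipN K L (specOp K L α p) q =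
      (L ^ 2 : ℂ) * ∑ r ∈ freqs K, (negLapSymbol L r : ℂ) ^ α * dft K p r * conj (dft K q r) :=
  ipN_fourierSum_left L _ _ q

lemma re_ipN_specOp_comm (α : ℤ) :
    (ipN K L (specOp K L α p) q).re = (ipN K L (specOp K L α q) p).re := by
  rw [← Complex.conj_re (ipN K L (specOp K L α q) p), ipN_specOp_left, ipN_specOp_left]
  simp only [map_mul, map_sum, map_pow, map_zpow₀, Complex.conj_ofReal, Complex.conj_conj]
  congr 2
  exact sum_congr rfl fun r _ => by ring

lemma ipN_D1_add_ipN_D2 :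
    ipN K L (D1 K L p) (D1 K L q) + ipN K L (D2 K L p) (D2 K L q) =
      ipN K L (specOp K L 1 p) q := by
  rw [D1_eq_fourierSum, D1_eq_fourierSum, D2_eq_fourierSum, D2_eq_fourierSum,
    ipN_fourierSum_fourierSum L subset_rfl, ipN_fourierSum_fourierSum L subset_rfl,
    ipN_specOp_left, ← mul_add, ← sum_add_distrib,
    freqs_eq_erase, sum_erase _ (by simp [negLapSymbol])]
  refine congrArg _ (sum_congr rfl fun r _ => ?_)
  simp only [map_mul, map_div₀, map_ofNat, Complex.conj_ofReal, Complex.conj_I, map_intCast,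
    zpow_one, negLapSymbol]
  push_cast
  ring_nf
  rw [Complex.I_sq]
  ring

lemma ipN_lapN_lapN : ipN K L (lapN K L p) (lapN K L q) = ipN K L (bilapN K L p) q := by
  have hneg : ipN K L (lapN K L p) (lapN K L q) = ipN K L (specOp K L 1 p) (specOp K L 1 q) := by
    simp only [ipN, lapN, map_neg, neg_mul_neg]
  rw [hneg, specOp_eq_fourierSum L 1 q, specOp_eq_fourierSum L 1 p,
    ipN_fourierSum_fourierSum L freqs_subset_freqBox, bilapN, ipN_specOp_left]
  refine congrArg _ (sum_congr rfl fun r _ => ?_)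
  simp only [map_mul, Complex.conj_ofReal, zpow_one, zpow_two]
  ring

end SpectralOperators

section Energy

variable {K : ℕ} (L ε : ℝ)

lemma hasDerivAt_negNormSq_add_smul (p q : GridFn K) :
    HasDerivAt (fun s : ℝ => negNormSq K L (fun m => p m + s * q m))
      (2 * (ipN K L (invNegLapN K L p) q).re) 0 := by
  have h := hasDerivAt_re_ipN_add_smul L (invNegLapN K L p) (invNegLapN K L q) p q
  rw [invNegLapN, invNegLapN, re_ipN_specOp_comm L q p, ← two_mul] at h
  simpa only [negNormSq, invNegLapN, specOp_add_smul] using h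

lemma EN_eq (z : GridFn K) :
    EN K L ε z =
      (L / (2 * K + 1)) ^ 2 * ∑ m, (1 / 4 * (z m).re ^ 4 + (1 - ε) / 2 * (z m).re ^ 2)
      - ((ipN K L (D1 K L z) (D1 K L z)).re + (ipN K L (D2 K L z) (D2 K L z)).re)
      + (1 / 2) * (ipN K L (lapN K L z) (lapN K L z)).re := by
  simp only [EN, re_ipN_self, gradSqN, sum_add_distrib, sum_sub_distrib, ← mul_sum]
  ring

lemma hasDerivAt_quartic_add_quadratic (c x y : ℝ) :
    HasDerivAt (fun s : ℝ => 1 / 4 * (x + s * y) ^ 4 + c / 2 * (x + s * y) ^ 2)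
      ((x ^ 3 + c * x) * y) 0 := by
  have hlin : HasDerivAt (fun s : ℝ => x + s * y) y 0 := by
    simpa using ((hasDerivAt_id (0 : ℝ)).mul_const y).const_add x
  refine (((hlin.fun_pow 4).const_mul (1 / 4)).fun_add
    ((hlin.fun_pow 2).const_mul (c / 2))).congr_deriv ?_
  norm_num
  ring

lemma ipN_muN (v w : GridFn K) :
    ipN K L (muN K L ε v) w =
      ipN K L (fun m => v m ^ 3 + ((1 - ε : ℝ) : ℂ) * v m) w
        - 2 * (ipN K L (D1 K L v) (D1 K L w) + ipN K L (D2 K L v) (D2 K L w))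
        + ipN K L (lapN K L v) (lapN K L w) := by
  rw [ipN_D1_add_ipN_D2, ipN_lapN_lapN]
  simp only [ipN, muN, lapN, mul_sum, ← sum_sub_distrib, ← sum_add_distrib]
  exact sum_congr rfl fun m _ => by ring

lemma hasDerivAt_EN {v w : GridFn K} (hv : RealValued v) (hw : RealValued w) :
    HasDerivAt (fun s : ℝ => EN K L ε (fun m => v m + s * w m)) (ipN K L (muN K L ε v) w).re 0 := by
  have hlocal := (HasDerivAt.fun_sum (u := univ) fun m _ => hasDerivAt_quartic_add_quadratic
    (1 - ε) (v m).re (w m).re).const_mul ((L / (2 * K + 1)) ^ 2)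
  have hgrad := (hasDerivAt_re_ipN_add_smul L (D1 K L v) (D1 K L w) (D1 K L v) (D1 K L w)).fun_add
    (hasDerivAt_re_ipN_add_smul L (D2 K L v) (D2 K L w) (D2 K L v) (D2 K L w))
  have hlap := (hasDerivAt_re_ipN_add_smul L (lapN K L v) (lapN K L w) (lapN K L v)
    (lapN K L w)).const_mul (1 / 2)
  refine (((hlocal.fun_sub hgrad).fun_add hlap).congr_deriv ?_).congr_of_eventuallyEq
    (.of_forall fun s => ?_)
  · have hcubic (m : Fin (2 * K + 1) × Fin (2 * K + 1)) :
        (v m ^ 3 + ((1 - ε : ℝ) : ℂ) * v m).re = (v m).re ^ 3 + (1 - ε) * (v m).re := by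
      rw [← Complex.re_add_im (v m), hv m]
      simp [← Complex.ofReal_pow]
    rw [re_ipN_comm L (D1 K L w), re_ipN_comm L (D2 K L w), re_ipN_comm L (lapN K L w), ipN_muN]
    simp only [Complex.add_re, Complex.sub_re, Complex.mul_re, Complex.re_ofNat, Complex.im_ofNat,
      zero_mul, sub_zero, re_ipN_of_realValued_right L hw, hcubic]
    ring
  · simp only [EN_eq, D1_add_smul, D2_add_smul, lapN_add_smul, Complex.add_re,
      Complex.re_ofReal_mul]

end Energy

theorem GN_gateaux_derivative_general
    (K : ℕ) (L : ℝ) (ε : ℝ) (M : ℝ)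
    (a : ℝ) (ha : 0 < a) (b c : ℝ) (u1 u0 v : GridFn K)
    (hv : RealValued v)
    (f : GridFn K)
    (hf : f = fun m => (a : ℂ) * v m + (b : ℂ) * u1 m + (c : ℂ) * u0 m) :
    ∀ w : GridFn K, RealValued w →
      HasDerivAt (fun s : ℝ => GN K L ε M a b c u1 u0 (fun m => v m + (s : ℂ) * w m))
        ((ipN K L
          (fun m => (1 / (M : ℂ)) * invNegLapN K L f m + muN K L ε v m) w).re) 0 := by
  intro w hw
  have hGN (s : ℝ) : GN K L ε M a b c u1 u0 (fun m => v m + s * w m) =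
      1 / (2 * M * a) * negNormSq K L (fun m => f m + s * (a * w m)) +
        EN K L ε (fun m => v m + s * w m) := by
    rw [GN, hf]
    congr 3
    funext m
    ring
  refine ((((hasDerivAt_negNormSq_add_smul L f (fun m => a * w m)).const_mul _).fun_add
    (hasDerivAt_EN L ε hv hw)).congr_deriv ?_).congr_of_eventuallyEq (.of_forall hGN)
  rw [ipN_add_left, ipN_smul_left, ipN_ofReal_smul_right, Complex.add_re, Complex.re_ofReal_mul,
    show 1 / (M : ℂ) = ((1 / M : ℝ) : ℂ) by push_cast; rfl, Complex.re_ofReal_mul]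
  field_simp

/-- Gâteaux derivative of the BDF2–PFC objective: if `f = a v + b u¹ + c u⁰` has zero mean,
then for every real-valued grid function `w`, `s ↦ G_N(v + s w)` is differentiable at `0` with
derivative `Re(((1/M)(−Δ_N)⁻¹f + μ_N(v), w)_N)`. -/
theorem GN_gateaux_derivative
    (K : ℕ) (hK : 1 ≤ K) (L : ℝ) (hL : 0 < L) (ε : ℝ) (M : ℝ) (hM : 0 < M)
    (a : ℝ) (ha : 0 < a) (b c : ℝ) (u1 u0 v : GridFn K)
    (hu1 : RealValued u1) (hu0 : RealValued u0) (hv : RealValued v)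
    (f : GridFn K)
    (hf : f = fun m => (a : ℂ) * v m + (b : ℂ) * u1 m + (c : ℂ) * u0 m)
    (hmean : ZeroMean f) :
    ∀ w : GridFn K, RealValued w →
      HasDerivAt (fun s : ℝ => GN K L ε M a b c u1 u0 (fun m => v m + (s : ℂ) * w m))
        ((ipN K L
          (fun m => (1 / (M : ℂ)) * invNegLapN K L f m + muN K L ε v m) w).re) 0 :=
  GN_gateaux_derivative_general K L ε M a ha b c u1 u0 v hv f hf
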